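/- arXiv:2404.09725 — 3 statements merged into one kernel-verified Lean document; each statement's English description precedes it below -/
import Mathlib

section
/- Let ν be a Borel measure on ℝ with ν({0}) = 0 and ∫ min(x²,1) ν(dx) < ∞, and suppose that for some constants M > 0, α ∈ (0,2), ε ∈ (0,1] one has ∫_{[-η,η]} x² ν(dx) ≥ M η^{2-α} for all 0 < η ≤ ε. Then the characteristic function φ_t(u) = exp(t ∫_ℝ (cos(ux) - 1) ν(dx)) of the associated symmetric part satisfies |φ_t(u)| ≤ exp(-(2^α M / π^α) |u|^α t) for all |u| ≥ π/(2ε) and all t > 0. -/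
/-!
Writing `1 - cos y = 2 sin² (y / 2)` and bounding `sin` below by its chord on `[0, π / 4]` gives
`cos y - 1 ≤ -(4 / π²) y²` for `|y| ≤ π / 2`. With `η = π / (2 |u|) ≤ ε`, the integrand
`cos (u x) - 1` is nonpositive everywhere and at most `-(4 / π²) u² x²` on `[-η, η]`, so the exponent
is at most `-(4 / π²) u² M η ^ (2 - α) = -(2 ^ α M / π ^ α) |u| ^ α`.
-/

open Real MeasureTheory Set

namespace Real

theorem two_mul_sqrt_two_div_pi_mul_le_sin {x : ℝ} (hx₀ : 0 ≤ x) (hx : x ≤ π / 4) :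
    2 * √2 / π * x ≤ sin x := by
  have hπ := pi_pos
  have hconc := strictConcaveOn_sin_Icc.concaveOn.2 ⟨le_rfl, hπ.le⟩
    (⟨by positivity, by linarith⟩ : π / 4 ∈ Icc 0 π)
    (sub_nonneg.2 ((div_le_one hπ).2 (by linarith : 4 * x ≤ π)))
    (by positivity : 0 ≤ 4 * x / π) (sub_add_cancel 1 _)
  have hpt : (1 - 4 * x / π) • (0 : ℝ) + (4 * x / π) • (π / 4) = x := by
    simp only [smul_eq_mul]
    field_simp
    ring
  rw [hpt, sin_zero, sin_pi_div_four] at hconc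
  calc 2 * √2 / π * x = (1 - 4 * x / π) • (0 : ℝ) + (4 * x / π) • (√2 / 2) := by
        simp only [smul_eq_mul]
        field_simp
        ring
    _ ≤ sin x := hconc

theorem cos_le_one_sub_four_div_pi_sq_mul_sq {x : ℝ} (hx : |x| ≤ π / 2) :
    cos x ≤ 1 - 4 / π ^ 2 * x ^ 2 := by
  wlog hx₀ : 0 ≤ x
  case inr => simpa using this (by rwa [abs_neg]) <| neg_nonneg.2 <| le_of_not_ge hx₀
  rw [abs_of_nonneg hx₀] at hx
  have hsin := two_mul_sqrt_two_div_pi_mul_le_sin (x := x / 2) (by positivity) (by linarith)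
  have hsq := (pow_le_pow_left₀ (by positivity) hsin 2).trans_eq (sin_sq_eq_half_sub _)
  have hπ : π ≠ 0 := pi_ne_zero
  rw [mul_pow, div_pow, mul_pow, sq_sqrt zero_le_two] at hsq
  field_simp at hsq ⊢
  linarith

end Real

section LevyMeasure

variable {ν : Measure ℝ} (hν : Integrable (fun x => min (x ^ 2) 1) ν)
include hν

theorem integrableOn_sq_Icc_of_integrable_min_sq_one (R : ℝ) :
    IntegrableOn (fun x : ℝ => x ^ 2) (Icc (-R) R) ν := by
  refine (hν.const_mul (R ^ 2 + 1)).integrableOn.mono' (by fun_prop) ?_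
  refine (ae_restrict_iff' measurableSet_Icc).2 (ae_of_all _ fun x hx => ?_)
  have hxR : x ^ 2 ≤ R ^ 2 := sq_le_sq' hx.1 hx.2
  rw [norm_of_nonneg (sq_nonneg x)]
  rcases le_total (x ^ 2) 1 with h | h
  · rw [min_eq_left h]; nlinarith [sq_nonneg R, sq_nonneg x]
  · rw [min_eq_right h]; linarith

theorem integrable_cos_mul_sub_one_of_integrable_min_sq_one (u : ℝ) :
    Integrable (fun x => cos (u * x) - 1) ν := by
  refine (hν.const_mul (u ^ 2 + 2)).mono' (by fun_prop) (ae_of_all _ fun x => ?_)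
  rw [norm_of_nonpos (sub_nonpos.2 (cos_le_one _))]
  have hquad : 1 - cos (u * x) ≤ (u * x) ^ 2 / 2 := by
    linarith [one_sub_sq_div_two_le_cos (x := u * x)]
  rcases le_total (x ^ 2) 1 with h | h
  · rw [min_eq_left h]; nlinarith [sq_nonneg u, sq_nonneg x]
  · rw [min_eq_right h]; nlinarith [neg_one_le_cos (u * x), sq_nonneg u]

theorem integral_cos_mul_sub_one_le {u η : ℝ} (huη : |u| * η ≤ π / 2) :
    ∫ x, (cos (u * x) - 1) ∂ν ≤ -(4 / π ^ 2) * u ^ 2 * ∫ x in Icc (-η) η, x ^ 2 ∂ν := by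
  have hint := integrable_cos_mul_sub_one_of_integrable_min_sq_one hν u
  have hinner : ∫ x in Icc (-η) η, (cos (u * x) - 1) ∂ν
      ≤ ∫ x in Icc (-η) η, -(4 / π ^ 2) * u ^ 2 * x ^ 2 ∂ν := by
    refine setIntegral_mono_on hint.integrableOn
      ((integrableOn_sq_Icc_of_integrable_min_sq_one hν η).const_mul _) measurableSet_Icc
      fun x hx => ?_
    have hux : |u * x| ≤ π / 2 := by
      rw [abs_mul]
      exact (mul_le_mul_of_nonneg_left (abs_le.2 hx) (abs_nonneg u)).trans huη
    linarith [cos_le_one_sub_four_div_pi_sq_mul_sq hux, mul_pow u x 2]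
  have houter : ∫ x in (Icc (-η) η)ᶜ, (cos (u * x) - 1) ∂ν ≤ 0 :=
    integral_nonpos fun x => sub_nonpos.2 (cos_le_one _)
  rw [← integral_add_compl measurableSet_Icc hint, ← integral_const_mul]
  exact add_le_of_le_of_nonpos hinner houter

end LevyMeasure

theorem four_div_pi_sq_mul_sq_mul_rpow (α : ℝ) {v : ℝ} (hv : 0 < v) :
    4 / π ^ 2 * v ^ 2 * (π / (2 * v)) ^ (2 - α) = 2 ^ α / π ^ α * v ^ α := by
  have hπ := pi_pos
  rw [rpow_sub (by positivity), rpow_two, div_rpow hπ.le (by positivity),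
    mul_rpow zero_le_two hv.le]
  field_simp
  ring

theorem charFun_decay_of_levy_lower_bound_general
    (ν : Measure ℝ) (M α ε : ℝ)
    (hε : 0 < ε)
    (hνint : Integrable (fun x => min (x ^ 2) 1) ν)
    (hlow : ∀ η : ℝ, 0 < η → η ≤ ε →
      M * η ^ (2 - α) ≤ ∫ x in Set.Icc (-η) η, x ^ 2 ∂ν) :
    ∀ t : ℝ, 0 < t → ∀ u : ℝ, π / (2 * ε) ≤ |u| →
      Real.exp (t * ∫ x, (Real.cos (u * x) - 1) ∂ν)
        ≤ Real.exp (-(2 ^ α * M / π ^ α) * |u| ^ α * t) := by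
  intro t ht u hu
  have hu₀ : 0 < |u| := (by positivity : 0 < π / (2 * ε)).trans_le hu
  set η := π / (2 * |u|)
  have hηε : η ≤ ε := by
    rw [div_le_iff₀ (by positivity)]
    linarith [(div_le_iff₀ (by positivity)).1 hu]
  have huη : |u| * η = π / 2 := by simp only [η]; field_simp
  have hkey := integral_cos_mul_sub_one_le hνint huη.le
  have hlowη := mul_le_mul_of_nonpos_left (hlow η (by positivity) hηε)
    (by rw [neg_mul]; exact neg_nonpos.2 (by positivity) : -(4 / π ^ 2) * u ^ 2 ≤ 0)
  have hexp : -(4 / π ^ 2) * u ^ 2 * (M * η ^ (2 - α)) = -(2 ^ α * M / π ^ α) * |u| ^ α := by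
    rw [← sq_abs u]
    linear_combination (-M) * four_div_pi_sq_mul_sq_mul_rpow α hu₀
  rw [exp_le_exp]
  calc t * ∫ x, (cos (u * x) - 1) ∂ν
      ≤ t * (-(4 / π ^ 2) * u ^ 2 * (M * η ^ (2 - α))) := by gcongr; exact hkey.trans hlowη
    _ = -(2 ^ α * M / π ^ α) * |u| ^ α * t := by rw [hexp]; ring

theorem charFun_decay_of_levy_lower_bound
    (ν : Measure ℝ) (M α ε : ℝ)
    (hM : 0 < M) (hα : 0 < α) (hα2 : α < 2) (hε : 0 < ε) (hε1 : ε ≤ 1)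
    (hν0 : ν {0} = 0)
    (hνint : Integrable (fun x => min (x ^ 2) 1) ν)
    (hlow : ∀ η : ℝ, 0 < η → η ≤ ε →
      M * η ^ (2 - α) ≤ ∫ x in Set.Icc (-η) η, x ^ 2 ∂ν) :
    ∀ t : ℝ, 0 < t → ∀ u : ℝ, π / (2 * ε) ≤ |u| →
      Real.exp (t * ∫ x, (Real.cos (u * x) - 1) ∂ν)
        ≤ Real.exp (-(2 ^ α * M / π ^ α) * |u| ^ α * t) :=
  charFun_decay_of_levy_lower_bound_general ν M α ε hε hνint hlow
end

section
/- Let φ: ℝ → ℂ satisfy |φ(u)| ≤ 1 for all u and |φ(u)|² ≤ exp(-(2^{α+1}M/π^α)|u|^α Δ) for |u| ≥ π/(2ε), where M, Δ > 0, α ∈ (0,2), ε ∈ (0,1]. Then ∫_ℝ |φ(u)|² du ≤ K'(Δ^{-1/α} e^{-κΔ/ε^α} + 1/ε) for constants K', κ > 0 depending only on α and M. -/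
open Real MeasureTheory

open Set

lemma intA {p b : ℝ} (hp : 0 < p) (hb : 0 < b) :
    IntegrableOn (fun x : ℝ => exp (-b * x ^ p)) (Ioi 0) := by
  rw [← integrableOn_Ioi_comp_rpow_iff' (fun x : ℝ => exp (-b * x ^ p))
    (one_div_ne_zero hp.ne')]
  have base : IntegrableOn (fun x : ℝ => ((fun y : ℝ => exp (-y) * y ^ (1/p - 1)) (b * x))) (Ioi 0) := by
    refine (integrableOn_Ioi_comp_mul_left_iff (fun y : ℝ => exp (-y) * y ^ (1/p - 1)) 0 hb).mpr ?_
    rw [mul_zero]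
    exact Real.GammaIntegral_convergent (by positivity : (0:ℝ) < 1/p)
  have key := base.smul (b ^ (1 - 1/p))
  refine IntegrableOn.congr_fun key (fun x hx => ?_) measurableSet_Ioi
  have hx' : (0:ℝ) < x := hx
  have h1 : (x ^ (1/p)) ^ p = x := by
    rw [← rpow_mul hx'.le, one_div_mul_cancel hp.ne', rpow_one]
  simp only [Pi.smul_apply, smul_eq_mul, h1]
  rw [mul_rpow hb.le hx'.le, show b ^ (1 - 1/p) * (rexp (-(b * x)) * (b ^ (1/p - 1) * x ^ (1/p - 1)))
    = (b ^ (1 - 1/p) * b ^ (1/p - 1)) * (rexp (-(b * x)) * x ^ (1/p - 1)) by ring,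
    ← rpow_add hb]
  norm_num
  ring_nf

lemma intAbs {f : ℝ → ℝ} (hf : IntegrableOn f (Ioi 0)) :
    Integrable (fun x : ℝ => f |x|) := by
  have hIoi : IntegrableOn (fun x : ℝ => f |x|) (Ioi 0) := by
    refine IntegrableOn.congr_fun hf (fun x hx => ?_) measurableSet_Ioi
    rw [abs_of_pos (show (0:ℝ) < x from hx)]
  have hIic : IntegrableOn (fun x : ℝ => f |x|) (Iic 0) := by
    rw [← Measure.map_neg_eq_self (volume : Measure ℝ)]
    have m : MeasurableEmbedding fun x : ℝ => -x := (Homeomorph.neg ℝ).measurableEmbedding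
    rw [m.integrableOn_map_iff]
    simp_rw [Function.comp_def, abs_neg, neg_preimage, neg_Iic, neg_zero]
    exact (integrableOn_Ici_iff_integrableOn_Ioi).mpr hIoi
  have := hIic.union hIoi
  rwa [Iic_union_Ioi, integrableOn_univ] at this

theorem charFun_sq_L2_bound (α M : ℝ) (hα : 0 < α) (hα2 : α < 2) (hM : 0 < M) :
    ∃ K' κ : ℝ, 0 < K' ∧ 0 < κ ∧
      ∀ (Δ ε : ℝ) (φ : ℝ → ℂ), 0 < Δ → 0 < ε → ε ≤ 1 →
        (∀ u : ℝ, ‖φ u‖ ≤ 1) →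
        (∀ u : ℝ, π / (2 * ε) ≤ |u| →
          ‖φ u‖ ^ 2 ≤ Real.exp (-(2 ^ (α + 1) * M / π ^ α) * |u| ^ α * Δ)) →
        (∫ u : ℝ, ‖φ u‖ ^ 2)
          ≤ K' * (Δ ^ (-1 / α) * Real.exp (-κ * Δ / ε ^ α) + 1 / ε) := by
  have hπ : (0:ℝ) < π := Real.pi_pos
  set b : ℝ := 2 ^ α * M / π ^ α with hb_def
  have hb : 0 < b := by positivity
  set G : ℝ := Real.Gamma (1/α + 1) with hG_def
  have hG : 0 < G := Real.Gamma_pos_of_pos (by positivity)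
  set C : ℝ := 2 * b ^ (-1/α) * G with hC_def
  have hC : 0 < C := by positivity
  refine ⟨π + C, M, by positivity, hM, ?_⟩
  intro Δ ε φ hΔ hε hε1 hφ1 hφ2
  set a : ℝ := π / (2 * ε) with ha_def
  have ha : 0 < a := by positivity
  have hεα : (0:ℝ) < ε ^ α := rpow_pos_of_pos hε α
  have hX : 0 ≤ Δ ^ (-1/α) * Real.exp (-M * Δ / ε ^ α) := by positivity
  have hRHS : 0 ≤ (π + C) * (Δ ^ (-1/α) * Real.exp (-M * Δ / ε ^ α) + 1 / ε) := by positivity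
  by_cases hInt : Integrable (fun u : ℝ => ‖φ u‖ ^ 2)
  swap
  · rw [integral_undef hInt]; exact hRHS
  -- key computation
  have hcalc : b * a ^ α = M / ε ^ α := by
    have h2α : (0:ℝ) < 2 ^ α := by positivity
    have hπα : (0:ℝ) < π ^ α := by positivity
    rw [ha_def, div_rpow hπ.le (by positivity), mul_rpow (by norm_num : (0:ℝ) ≤ 2) hε.le, hb_def]
    field_simp
  have hbΔ : 0 < b * Δ := by positivity
  -- inner integral
  have hinner : ∫ u in Icc (-a) a, ‖φ u‖ ^ 2 ≤ π / ε := by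
    have h1 : ∫ u in Icc (-a) a, ‖φ u‖ ^ 2 ≤ ∫ _ in Icc (-a) a, (1:ℝ) := by
      refine setIntegral_mono_on hInt.integrableOn
        (integrableOn_const measure_Icc_lt_top.ne) measurableSet_Icc
        (fun x _ => pow_le_one₀ (norm_nonneg _) (hφ1 x))
    rw [setIntegral_const, smul_eq_mul, mul_one,
      Real.volume_real_Icc_of_le (by linarith : -a ≤ a)] at h1
    have : a - -a = π / ε := by rw [ha_def]; field_simp; ring
    linarith [h1, this ▸ h1]
  -- the dominating function on the outside
  set h : ℝ → ℝ := fun u => Real.exp (-(M * Δ / ε ^ α)) * Real.exp (-(b*Δ) * |u| ^ α) with hh_def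
  have hInth : Integrable h := (intAbs (intA hα hbΔ)).const_mul _
  have houter : ∫ u in (Icc (-a) a)ᶜ, ‖φ u‖ ^ 2
      ≤ Real.exp (-(M * Δ / ε ^ α)) * (2 * ((b*Δ) ^ (-1/α) * G)) := by
    have step1 : ∫ u in (Icc (-a) a)ᶜ, ‖φ u‖ ^ 2 ≤ ∫ u in (Icc (-a) a)ᶜ, h u := by
      refine setIntegral_mono_on hInt.integrableOn hInth.integrableOn
        measurableSet_Icc.compl (fun u hu => ?_)
      have hua : a ≤ |u| := by
        by_contra hlt
        exact hu (Set.mem_Icc.mpr (abs_le.mp (le_of_not_ge fun hh' => hlt (le_trans hh' le_rfl))))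
      have huα : a ^ α ≤ |u| ^ α := rpow_le_rpow ha.le hua hα.le
      have hsplit : Real.exp (-(2 ^ (α + 1) * M / π ^ α) * |u| ^ α * Δ)
          = Real.exp (-(b*Δ) * |u| ^ α) * Real.exp (-(b*Δ) * |u| ^ α) := by
        rw [← Real.exp_add]
        congr 1
        have h2 : (2:ℝ) ^ (α + 1) = 2 * 2 ^ α := by
          rw [rpow_add (by norm_num : (0:ℝ) < 2), rpow_one]; ring
        rw [h2, hb_def]
        field_simp
        ring
      have hfac : Real.exp (-(b*Δ) * |u| ^ α) ≤ Real.exp (-(M * Δ / ε ^ α)) := by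
        rw [Real.exp_le_exp]
        have : M * Δ / ε ^ α = (b * a ^ α) * Δ := by rw [hcalc]; ring
        rw [this]
        nlinarith [huα, hbΔ]
      calc ‖φ u‖ ^ 2 ≤ Real.exp (-(2 ^ (α + 1) * M / π ^ α) * |u| ^ α * Δ) := hφ2 u hua
        _ = Real.exp (-(b*Δ) * |u| ^ α) * Real.exp (-(b*Δ) * |u| ^ α) := hsplit
        _ ≤ Real.exp (-(M * Δ / ε ^ α)) * Real.exp (-(b*Δ) * |u| ^ α) :=
            mul_le_mul_of_nonneg_right hfac (Real.exp_nonneg _)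
        _ = h u := rfl
    have step2 : ∫ u in (Icc (-a) a)ᶜ, h u ≤ ∫ u, h u := by
      refine setIntegral_le_integral hInth (Filter.Eventually.of_forall fun u => ?_)
      positivity
    have step3 : ∫ u, h u = Real.exp (-(M * Δ / ε ^ α)) * (2 * ((b*Δ) ^ (-1/α) * G)) := by
      rw [hh_def]
      rw [integral_const_mul]
      congr 1
      have := integral_comp_abs (f := fun x : ℝ => Real.exp (-(b*Δ) * x ^ α))
      rw [this, integral_exp_neg_mul_rpow hα hbΔ]
    linarith
  -- combine
  rw [← integral_add_compl (measurableSet_Icc : MeasurableSet (Icc (-a) a)) hInt]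
  have hsum : (∫ u in Icc (-a) a, ‖φ u‖ ^ 2) + ∫ u in (Icc (-a) a)ᶜ, ‖φ u‖ ^ 2
      ≤ π / ε + Real.exp (-(M * Δ / ε ^ α)) * (2 * ((b*Δ) ^ (-1/α) * G)) :=
    add_le_add hinner houter
  have hrw : Real.exp (-(M * Δ / ε ^ α)) * (2 * ((b*Δ) ^ (-1/α) * G))
      = C * (Δ ^ (-1/α) * Real.exp (-M * Δ / ε ^ α)) := by
    rw [mul_rpow hb.le hΔ.le, hC_def]
    rw [show -M * Δ / ε ^ α = -(M * Δ / ε ^ α) by ring]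
    ring
  have hfin : π / ε + C * (Δ ^ (-1/α) * Real.exp (-M * Δ / ε ^ α))
      ≤ (π + C) * (Δ ^ (-1/α) * Real.exp (-M * Δ / ε ^ α) + 1 / ε) := by
    have h1 : π / ε = π * (1/ε) := by ring
    nlinarith [hX, mul_nonneg hπ.le hX, mul_pos hC (show (0:ℝ) < 1/ε by positivity)]
  calc _ ≤ π / ε + Real.exp (-(M * Δ / ε ^ α)) * (2 * ((b*Δ) ^ (-1/α) * G)) := hsum
    _ = π / ε + C * (Δ ^ (-1/α) * Real.exp (-M * Δ / ε ^ α)) := by rw [hrw]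
    _ ≤ _ := hfin
end

section
/- Let φ_Y be the characteristic function of a real random variable Y and λ, Δ > 0 with λΔ ≤ 1. Let φ_X = φ_Z · exp(λΔ(φ_Y − 1)) for some characteristic function φ_Z (of the small-jump part), with both |φ_X|, |φ_Z| ≤ 1. Then for any m > 0, (1/(2π))∫_{-m}^m |φ_X(u)|² · |1 − exp(λΔ(1−φ_Y(u)))|² du ≤ (2e⁴(λΔ)²/π) ∫_ℝ |φ_X(u)|² du. -/
/-!
Since `‖φ_Y‖ ≤ 1`, the exponent `z = λΔ(1 - φ_Y(u))` has `‖z‖ ≤ 2λΔ ≤ 2`, so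
`‖1 - exp z‖ ≤ ‖z‖ e^{‖z‖} ≤ 2λΔ e²` uniformly in `u`. Squaring this, the integrand is at most
`4e⁴(λΔ)² ‖φ_X(u)‖²`, and enlarging `[-m, m]` to `ℝ` gives the bound.
-/

open Real MeasureTheory ProbabilityTheory

lemma Complex.norm_one_sub_exp_le_norm_mul_exp (z : ℂ) :
    ‖1 - Complex.exp z‖ ≤ ‖z‖ * Real.exp ‖z‖ := by
  simpa [norm_sub_rev] using Complex.norm_exp_sub_sum_le_norm_mul_exp z 1

lemma norm_one_sub_exp_mul_one_sub_le {c : ℝ} (hc : 0 ≤ c) {w : ℂ} (hw : ‖w‖ ≤ 1) :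
    ‖1 - Complex.exp (c * (1 - w))‖ ≤ 2 * c * Real.exp (2 * c) := by
  have hz : ‖(c : ℂ) * (1 - w)‖ ≤ 2 * c := by
    rw [norm_mul, Complex.norm_real, Real.norm_of_nonneg hc, mul_comm]
    gcongr
    calc ‖1 - w‖ ≤ ‖(1 : ℂ)‖ + ‖w‖ := norm_sub_le _ _
      _ ≤ 2 := by rw [norm_one]; linarith
  calc ‖1 - Complex.exp (c * (1 - w))‖ ≤ ‖(c : ℂ) * (1 - w)‖ * Real.exp ‖(c : ℂ) * (1 - w)‖ :=
        Complex.norm_one_sub_exp_le_norm_mul_exp _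
    _ ≤ 2 * c * Real.exp (2 * c) := by gcongr

lemma intervalIntegral_mul_le_mul_integral {μ : Measure ℝ} {f h : ℝ → ℝ} {C a b : ℝ}
    (hab : a ≤ b) (hf : Integrable f μ) (hf0 : ∀ u, 0 ≤ f u) (hh : AEStronglyMeasurable h μ)
    (hh0 : ∀ u, 0 ≤ h u) (hhC : ∀ u, h u ≤ C) :
    ∫ u in a..b, f u * h u ∂μ ≤ C * ∫ u, f u ∂μ := by
  have hfh : Integrable (fun u => f u * h u) μ :=
    hf.mul_bdd hh (.of_forall fun u => by rw [Real.norm_of_nonneg (hh0 u)]; exact hhC u)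
  rw [intervalIntegral.integral_of_le hab, ← integral_const_mul]
  calc ∫ u in Set.Ioc a b, f u * h u ∂μ ≤ ∫ u, f u * h u ∂μ :=
        setIntegral_le_integral hfh (.of_forall fun u => mul_nonneg (hf0 u) (hh0 u))
    _ ≤ ∫ u, C * f u ∂μ :=
        integral_mono hfh (hf.const_mul C) fun u => by
          rw [mul_comm C]; exact mul_le_mul_of_nonneg_left (hhC u) (hf0 u)

theorem extra_bias_term_bound_general
    {Ω : Type*} [MeasureSpace Ω] [IsProbabilityMeasure (ℙ : Measure Ω)]
    (Y : Ω → ℝ) (hY : Measurable Y)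
    (φY : ℝ → ℂ) (hφY : ∀ u : ℝ, φY u = ∫ ω, Complex.exp (u * Y ω * Complex.I))
    (lam Δ : ℝ) (hlam : 0 < lam) (hΔ : 0 < Δ) (hlamΔ : lam * Δ ≤ 1)
    (φX : ℝ → ℂ)
    (hInt : Integrable (fun u : ℝ => ‖φX u‖ ^ 2))
    (m : ℝ) (hm : 0 < m) :
    (1 / (2 * π)) * ∫ u in (-m)..m,
        ‖φX u‖ ^ 2 * ‖1 - Complex.exp (lam * Δ * (1 - φY u))‖ ^ 2
      ≤ (2 * Real.exp 4 * (lam * Δ) ^ 2 / π) * ∫ u : ℝ, ‖φX u‖ ^ 2 := by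
  have : IsProbabilityMeasure (volume.map Y) := Measure.isProbabilityMeasure_map hY.aemeasurable
  obtain rfl : φY = charFun (volume.map Y) := funext fun u => by
    rw [hφY, charFun_apply_real, integral_map hY.aemeasurable (by fun_prop)]
  have hcoef : 0 ≤ lam * Δ := (mul_pos hlam hΔ).le
  have hjump : ∀ u, ‖1 - Complex.exp (lam * Δ * (1 - charFun (volume.map Y) u))‖
      ≤ 2 * (lam * Δ) * Real.exp 2 := fun u => by
    have := norm_one_sub_exp_mul_one_sub_le hcoef (norm_charFun_le_one (μ := volume.map Y) u)
    push_cast at this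
    exact this.trans (by gcongr; linarith)
  have hmeas : AEStronglyMeasurable
      (fun u => ‖1 - Complex.exp (lam * Δ * (1 - charFun (volume.map Y) u))‖ ^ 2) :=
    (by fun_prop : Continuous _).aestronglyMeasurable
  calc (1 / (2 * π)) * ∫ u in (-m)..m,
          ‖φX u‖ ^ 2 * ‖1 - Complex.exp (lam * Δ * (1 - charFun (volume.map Y) u))‖ ^ 2
      ≤ (1 / (2 * π)) * ((2 * (lam * Δ) * Real.exp 2) ^ 2 * ∫ u, ‖φX u‖ ^ 2) := by
        gcongr
        exact intervalIntegral_mul_le_mul_integral (by linarith) hInt (fun u => by positivity)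
          hmeas (fun u => by positivity) fun u => by gcongr; exact hjump u
    _ = (2 * Real.exp 4 * (lam * Δ) ^ 2 / π) * ∫ u : ℝ, ‖φX u‖ ^ 2 := by
        rw [show Real.exp 4 = Real.exp 2 ^ 2 by rw [← Real.exp_nat_mul]; norm_num]
        field_simp

theorem extra_bias_term_bound
    {Ω : Type*} [MeasureSpace Ω] [IsProbabilityMeasure (ℙ : Measure Ω)]
    (Y : Ω → ℝ) (hY : Measurable Y)
    (φY : ℝ → ℂ) (hφY : ∀ u : ℝ, φY u = ∫ ω, Complex.exp (u * Y ω * Complex.I))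
    (lam Δ : ℝ) (hlam : 0 < lam) (hΔ : 0 < Δ) (hlamΔ : lam * Δ ≤ 1)
    (φX φZ : ℝ → ℂ)
    (hfac : ∀ u, φX u = φZ u * Complex.exp (lam * Δ * (φY u - 1)))
    (hX1 : ∀ u, ‖φX u‖ ≤ 1) (hZ1 : ∀ u, ‖φZ u‖ ≤ 1)
    (hInt : Integrable (fun u : ℝ => ‖φX u‖ ^ 2))
    (m : ℝ) (hm : 0 < m) :
    (1 / (2 * π)) * ∫ u in (-m)..m,
        ‖φX u‖ ^ 2 * ‖1 - Complex.exp (lam * Δ * (1 - φY u))‖ ^ 2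
      ≤ (2 * Real.exp 4 * (lam * Δ) ^ 2 / π) * ∫ u : ℝ, ‖φX u‖ ^ 2 :=
  extra_bias_term_bound_general Y hY φY hφY lam Δ hlam hΔ hlamΔ φX hInt m hm
end
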